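/- arXiv:2502.04035 — 2 statements merged into one kernel-verified Lean document; each statement's English description precedes it below -/
import Mathlib

section
/- Let M = (S, s₀, X, Y, δ, λ) be an FSM whose distinct states are pairwise strongly separable, with witness function ω, state identification sets W(s), and state cover V as in the context, and let M_I = (Q, q₀, X, Y, δ_I, λ_I) be an FSM over the same alphabets. Suppose that for all v ∈ V and all w ∈ W(δ(s₀, v)) we have M ≈_{v·w} M_I, that M_I does not conform to M, and that ℓ ≥ 1 is the smallest positive integer such that D_ℓ ∪ DW_ℓ ≠ ∅. If (v, x̄) ∈ D_ℓ ∪ DW_ℓ and x̄₁, x̄₂ are two different nonempty proper prefixes of x̄, then δ_I(q₀, v·x̄₁) ≠ δ_I(q₀, v·x̄₂), i.e., v·x̄₁ and v·x̄₂ reach different states of M_I. -/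
/-- A (deterministic, completely-specified) FSM over input alphabet `X` and
output alphabet `Y`, with state type `S`: an initial state, a total transition
function and a total output function. -/
structure FSM (X Y S : Type) where
  init : S
  tr : S → X → S
  out : S → X → Y

namespace FSM

variable {X Y S : Type}

/-- The transition function extended to input sequences. -/
def trs (M : FSM X Y S) : S → List X → S
  | s, [] => s
  | s, x :: xs => M.trs (M.tr s x) xs

/-- The output function extended to input sequences. -/
def outs (M : FSM X Y S) : S → List X → List Y
  | _, [] => []
  | s, x :: xs => M.out s x :: M.outs (M.tr s x) xs

end FSM

/-- The input sequence `xs` separates state `s` of `M` from state `q` of `M'`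
(w.r.t. the similarity relation `sim`, lifted componentwise to sequences). -/
def Separates {X Y S S' : Type} (sim : Y → Y → Prop) (M : FSM X Y S) (M' : FSM X Y S')
    (s : S) (q : S') (xs : List X) : Prop :=
  ¬ List.Forall₂ sim (M.outs s xs) (M'.outs q xs)

/-- `xs` is a witness that states `s₁`, `s₂` of `M` are strongly separable:
every state `s₃` of every FSM `M'` over the same alphabets is separated by `xs`
from `s₁` or from `s₂`. -/
def StrongWitness {X Y S : Type} (sim : Y → Y → Prop) (M : FSM X Y S)
    (s₁ s₂ : S) (xs : List X) : Prop :=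
  ∀ (S' : Type) [Fintype S'] (M' : FSM X Y S') (s₃ : S'),
    Separates sim M M' s₁ s₃ xs ∨ Separates sim M M' s₂ s₃ xs

/-- `MI` conforms to `M`: on every input sequence the outputs are similar. -/
def Conforms {X Y S Q : Type} (sim : Y → Y → Prop) (MI : FSM X Y Q) (M : FSM X Y S) : Prop :=
  ∀ xs : List X, List.Forall₂ sim (M.outs M.init xs) (MI.outs MI.init xs)

/-- A state cover: a prefix-closed set of input sequences containing, for each
state, exactly one sequence reaching it from the initial state. -/
def StateCover {X Y S : Type} (M : FSM X Y S) (V : Set (List X)) : Prop :=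
  (∀ v ∈ V, ∀ u, u <+: v → u ∈ V) ∧
  ∀ s : S, ∃! v, v ∈ V ∧ M.trs M.init v = s

open Classical in
/-- One step of the product machine `P(M, MI)`; `none` is the error state `e`. -/
noncomputable def prodStep {X Y S Q : Type} (sim : Y → Y → Prop) (M : FSM X Y S)
    (MI : FSM X Y Q) : Option (S × Q) → X → Option (S × Q)
  | none, _ => none
  | some (s, q), x =>
      if sim (M.out s x) (MI.out q x) then some (M.tr s x, MI.tr q x) else none

/-- The transition function of the product machine extended to input sequences. -/
noncomputable def prodTrs {X Y S Q : Type} (sim : Y → Y → Prop) (M : FSM X Y S)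
    (MI : FSM X Y Q) : Option (S × Q) → List X → Option (S × Q)
  | p, [] => p
  | p, x :: xs => prodTrs sim M MI (prodStep sim M MI p x) xs

/-- The set `D_ℓ` of pairs `(v, x̄)` with `v ∈ V`, `|x̄| = ℓ`, and `M ≉_{v·x̄} M_I`. -/
def DSet {X Y S Q : Type} (sim : Y → Y → Prop) (M : FSM X Y S) (MI : FSM X Y Q)
    (V : Set (List X)) (ℓ : ℕ) : Set (List X × List X) :=
  {p | p.1 ∈ V ∧ p.2.length = ℓ ∧
    ¬ List.Forall₂ sim (M.outs M.init (p.1 ++ p.2)) (MI.outs MI.init (p.1 ++ p.2))}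

/-- The set `DW_ℓ` of pairs `(v, x̄)` with `v ∈ V`, `|x̄| = ℓ`, and
`M ≉_{v·x̄·w} M_I` for some `w ∈ W(δ(s₀, v·x̄))`. -/
def DWSet {X Y S Q : Type} (sim : Y → Y → Prop) (M : FSM X Y S) (MI : FSM X Y Q)
    (V : Set (List X)) (W : S → Set (List X)) (ℓ : ℕ) : Set (List X × List X) :=
  {p | p.1 ∈ V ∧ p.2.length = ℓ ∧
    ∃ w ∈ W (M.trs M.init (p.1 ++ p.2)),
      ¬ List.Forall₂ sim (M.outs M.init (p.1 ++ p.2 ++ w))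
          (MI.outs MI.init (p.1 ++ p.2 ++ w))}


namespace FSM

variable {X Y S : Type}

lemma trs_append (M : FSM X Y S) (s : S) (a b : List X) :
    M.trs s (a ++ b) = M.trs (M.trs s a) b := by
  induction a generalizing s with
  | nil => rfl
  | cons x xs ih => simp [trs, ih]

lemma outs_append (M : FSM X Y S) (s : S) (a b : List X) :
    M.outs s (a ++ b) = M.outs s a ++ M.outs (M.trs s a) b := by
  induction a generalizing s with
  | nil => rfl
  | cons x xs ih => simp [outs, trs, ih]

lemma outs_length (M : FSM X Y S) (s : S) (a : List X) :
    (M.outs s a).length = a.length := by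
  induction a generalizing s <;> simp [outs, *]

end FSM

lemma forall2_append_iff' {Y : Type} {R : Y → Y → Prop} {a₁ b₁ a₂ b₂ : List Y}
    (h : a₁.length = a₂.length) :
    List.Forall₂ R (a₁ ++ b₁) (a₂ ++ b₂) ↔ List.Forall₂ R a₁ a₂ ∧ List.Forall₂ R b₁ b₂ := by
  induction a₁ generalizing a₂ with
  | nil =>
    cases a₂ with
    | nil => simp
    | cons y ys => simp at h
  | cons x xs ih =>
    cases a₂ with
    | nil => simp at h
    | cons y ys =>
      simp only [List.cons_append, List.forall₂_cons] at *
      rw [ih (by simpa using h)]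
      tauto

lemma prefix_eq_of_le_length {α : Type} {l₁ l₂ : List α} (h : l₁ <+: l₂)
    (hl : l₂.length ≤ l₁.length) : l₁ = l₂ := by
  obtain ⟨t, rfl⟩ := h
  have ht : t = [] := List.eq_nil_of_length_eq_zero (by
    rw [List.length_append] at hl; omega)
  simp [ht]

lemma prefix_eq_of_length_eq {α : Type} {l₁ l₂ l : List α} (h₁ : l₁ <+: l)
    (h₂ : l₂ <+: l) (h : l₁.length = l₂.length) : l₁ = l₂ := by
  rw [List.prefix_iff_eq_take] at h₁ h₂
  rw [h₁, h₂, h]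

lemma sim_split {X Y S Q : Type} (sim : Y → Y → Prop) (M : FSM X Y S) (MI : FSM X Y Q)
    (s : S) (q : Q) (a b : List X) :
    List.Forall₂ sim (M.outs s (a ++ b)) (MI.outs q (a ++ b)) ↔
    List.Forall₂ sim (M.outs s a) (MI.outs q a) ∧
    List.Forall₂ sim (M.outs (M.trs s a) b) (MI.outs (MI.trs q a) b) := by
  rw [M.outs_append, MI.outs_append,
    forall2_append_iff' (by simp [FSM.outs_length])]

/-- Lemma 2: under the stated hypotheses, for `(v, x̄)` in
`D_ℓ ∪ DW_ℓ` with `ℓ` minimal, distinct nonempty proper prefixes `x̄₁`, `x̄₂`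
of `x̄` lead `M_I` to distinct states via `v·x̄₁` and `v·x̄₂`. -/
theorem lemma2_distinct_prefixes_distinct_states {X Y S Q : Type} [Fintype X] [Fintype S] [Fintype Q]
    (sim : Y → Y → Prop) (M : FSM X Y S) (MI : FSM X Y Q)
    (ω : S → S → List X)
    (hω : ∀ s₁ s₂ : S, s₁ ≠ s₂ →
      ω s₁ s₂ = ω s₂ s₁ ∧ StrongWitness sim M s₁ s₂ (ω s₁ s₂))
    (W : S → Set (List X))
    (hW : ∀ s₁ s₂ : S, s₁ ≠ s₂ →
      (∃ w ∈ W s₁, ω s₁ s₂ <+: w) ∧ (∃ w ∈ W s₂, ω s₁ s₂ <+: w))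
    (V : Set (List X)) (hV : StateCover M V)
    (hVW : ∀ v ∈ V, ∀ w ∈ W (M.trs M.init v),
      List.Forall₂ sim (M.outs M.init (v ++ w)) (MI.outs MI.init (v ++ w)))
    (hnc : ¬ Conforms sim MI M)
    (ℓ : ℕ) (hℓ : 1 ≤ ℓ)
    (hne : (DSet sim M MI V ℓ ∪ DWSet sim M MI V W ℓ).Nonempty)
    (hmin : ∀ ℓ' : ℕ, 1 ≤ ℓ' → ℓ' < ℓ →
      DSet sim M MI V ℓ' ∪ DWSet sim M MI V W ℓ' = ∅)
    (v xb : List X) (hmem : (v, xb) ∈ DSet sim M MI V ℓ ∪ DWSet sim M MI V W ℓ)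
    (xb₁ xb₂ : List X)
    (h11 : xb₁ ≠ []) (h12 : xb₁ <+: xb) (h13 : xb₁ ≠ xb)
    (h21 : xb₂ ≠ []) (h22 : xb₂ <+: xb) (h23 : xb₂ ≠ xb)
    (hdiff : xb₁ ≠ xb₂) :
    MI.trs MI.init (v ++ xb₁) ≠ MI.trs MI.init (v ++ xb₂) := by
  intro heq
  have hv : v ∈ V := by rcases hmem with h | h <;> exact h.1
  have hxb : xb.length = ℓ := by rcases hmem with h | h <;> exact h.2.1
  have key : ∀ u : List X, u ≠ [] → u <+: xb → u ≠ xb →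
      List.Forall₂ sim (M.outs M.init (v ++ u)) (MI.outs MI.init (v ++ u)) ∧
      ∀ w ∈ W (M.trs M.init (v ++ u)),
        List.Forall₂ sim (M.outs M.init (v ++ u ++ w)) (MI.outs MI.init (v ++ u ++ w)) := by
    intro u hne hpre hneq
    have hlen1 : 1 ≤ u.length := by
      cases u with
      | nil => exact absurd rfl hne
      | cons _ _ => simp
    have hlt : u.length < ℓ := by
      have h1 := hpre.length_le
      rcases Nat.lt_or_ge u.length ℓ with h | h
      · exact h
      · exact absurd (prefix_eq_of_le_length hpre (by omega)) hneq
    have hem := hmin u.length hlen1 hlt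
    constructor
    · by_contra h
      have hin : (v, u) ∈ DSet sim M MI V u.length ∪ DWSet sim M MI V W u.length :=
        Or.inl ⟨hv, rfl, h⟩
      rw [hem] at hin
      exact hin
    · intro w hw
      by_contra h
      have hin : (v, u) ∈ DSet sim M MI V u.length ∪ DWSet sim M MI V W u.length :=
        Or.inr ⟨hv, rfl, w, hw, h⟩
      rw [hem] at hin
      exact hin
  have aux : ∀ a b : List X, a ≠ [] → a <+: xb → b <+: xb → b ≠ xb →
      a.length < b.length →
      MI.trs MI.init (v ++ a) = MI.trs MI.init (v ++ b) → False := by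
    intro a b ha hpa hpb hbne hab hq
    have hbl : b.length ≤ ℓ := by have := hpb.length_le; omega
    have hb' : b ≠ [] := by
      intro h; rw [h] at hab; simp at hab
    have haxb : a ≠ xb := by
      intro h
      rw [h] at hab
      omega
    obtain ⟨hsima, hWa⟩ := key a ha hpa haxb
    obtain ⟨hsimb, hWb⟩ := key b hb' hpb hbne
    by_cases hs : M.trs M.init (v ++ a) = M.trs M.init (v ++ b)
    · -- same M-states: shorten xb, contradicting minimality of ℓ
      obtain ⟨r, hr⟩ := hpb
      have hblen : b.length < ℓ := by
        rcases Nat.lt_or_ge b.length ℓ with h | h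
        · exact h
        · exact absurd (prefix_eq_of_le_length ⟨r, hr⟩ (by omega)) hbne
      have hrlen : xb.length = b.length + r.length := by
        rw [← hr]; simp
      have hlen1 : 1 ≤ (a ++ r).length := by
        cases a with
        | nil => exact absurd rfl ha
        | cons _ _ => simp
      have hlen2 : (a ++ r).length < ℓ := by
        rw [List.length_append]; omega
      have hem := hmin (a ++ r).length hlen1 hlen2
      have htrans : ∀ c : List X,
          ¬ List.Forall₂ sim (M.outs M.init (v ++ (b ++ c))) (MI.outs MI.init (v ++ (b ++ c))) →
          ¬ List.Forall₂ sim (M.outs M.init (v ++ (a ++ c))) (MI.outs MI.init (v ++ (a ++ c))) := by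
        intro c hbad h
        apply hbad
        rw [← List.append_assoc]
        rw [← List.append_assoc] at h
        rw [sim_split sim M MI M.init MI.init (v ++ b) c]
        refine ⟨hsimb, ?_⟩
        rw [← hs, ← hq]
        exact ((sim_split sim M MI M.init MI.init (v ++ a) c).mp h).2
      have htr : M.trs M.init (v ++ (a ++ r)) = M.trs M.init (v ++ xb) := by
        rw [← hr, ← List.append_assoc, ← List.append_assoc,
          M.trs_append M.init (v ++ a) r, M.trs_append M.init (v ++ b) r, hs]
      rcases hmem with hmem | hmem
      · have hbad0 : ¬ List.Forall₂ sim (M.outs M.init (v ++ xb))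
            (MI.outs MI.init (v ++ xb)) := hmem.2.2
        rw [← hr] at hbad0
        have hnew := htrans r hbad0
        have hin : (v, a ++ r) ∈
            DSet sim M MI V (a ++ r).length ∪ DWSet sim M MI V W (a ++ r).length :=
          Or.inl ⟨hv, rfl, hnew⟩
        rw [hem] at hin
        exact hin
      · obtain ⟨-, -, w, hw0, hbad0⟩ := hmem
        have hw1 : w ∈ W (M.trs M.init (v ++ xb)) := hw0
        have hbad1 : ¬ List.Forall₂ sim (M.outs M.init (v ++ xb ++ w))
            (MI.outs MI.init (v ++ xb ++ w)) := hbad0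
        rw [← hr] at hbad1
        have hbad2 : ¬ List.Forall₂ sim (M.outs M.init (v ++ (b ++ (r ++ w))))
            (MI.outs MI.init (v ++ (b ++ (r ++ w)))) := by
          simpa only [List.append_assoc] using hbad1
        have hnew := htrans (r ++ w) hbad2
        have hw2 : w ∈ W (M.trs M.init (v ++ (a ++ r))) := by
          rw [htr]; exact hw1
        have hnew2 : ¬ List.Forall₂ sim (M.outs M.init (v ++ (a ++ r) ++ w))
            (MI.outs MI.init (v ++ (a ++ r) ++ w)) := by
          simpa only [List.append_assoc] using hnew
        have hin : (v, a ++ r) ∈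
            DSet sim M MI V (a ++ r).length ∪ DWSet sim M MI V W (a ++ r).length :=
          Or.inr ⟨hv, rfl, w, hw2, hnew2⟩
        rw [hem] at hin
        exact hin
    · -- distinct M-states: use the strong witness
      obtain ⟨-, hwit⟩ := hω _ _ hs
      obtain ⟨⟨w₁, hw₁, hp₁⟩, w₂, hw₂, hp₂⟩ := hW _ _ hs
      rcases hwit Q MI (MI.trs MI.init (v ++ a)) with hsep | hsep
      · apply hsep
        have h2 := ((sim_split sim M MI M.init MI.init (v ++ a) w₁).mp (hWa w₁ hw₁)).2
        obtain ⟨t, ht⟩ := hp₁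
        rw [← ht] at h2
        exact ((sim_split sim M MI _ _ _ t).mp h2).1
      · apply hsep
        have h2 := ((sim_split sim M MI M.init MI.init (v ++ b) w₂).mp (hWb w₂ hw₂)).2
        obtain ⟨t, ht⟩ := hp₂
        rw [← ht] at h2
        rw [hq]
        exact ((sim_split sim M MI _ _ _ t).mp h2).1
  rcases Nat.lt_trichotomy xb₁.length xb₂.length with h | h | h
  · exact aux xb₁ xb₂ h11 h12 h22 h23 h heq
  · exact absurd (prefix_eq_of_length_eq h12 h22 h) hdiff
  · exact aux xb₂ xb₁ h21 h22 h12 h13 h heq.symm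
end

section
/- Let M = (S, s₀, X, Y, δ, λ) be an FSM with n states whose distinct states are pairwise strongly separable, with witness function ω, state identification sets W(s), and state cover V as in the context, and let M_I = (Q, q₀, X, Y, δ_I, λ_I) be an FSM over the same alphabets with at most m = n + k states. If D_ℓ = ∅ and DW_ℓ = ∅ for all ℓ with 0 ≤ ℓ ≤ k + 1, then M_I conforms to M. -/
section HSIAux

variable {X Y S Q : Type}

theorem FSM.trs_append_s14 (M : FSM X Y S) (s : S) (a b : List X) :
    M.trs s (a ++ b) = M.trs (M.trs s a) b := by
  induction a generalizing s with
  | nil => rfl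
  | cons x xs ih => simp [FSM.trs, ih]

theorem FSM.outs_append_s14 (M : FSM X Y S) (s : S) (a b : List X) :
    M.outs s (a ++ b) = M.outs s a ++ M.outs (M.trs s a) b := by
  induction a generalizing s with
  | nil => rfl
  | cons x xs ih => simp [FSM.outs, FSM.trs, ih]

theorem FSM.outs_length_s14 (M : FSM X Y S) (s : S) (a : List X) :
    (M.outs s a).length = a.length := by
  induction a generalizing s with
  | nil => rfl
  | cons x xs ih => simp [FSM.outs, ih]

theorem FSM.trs_singleton (M : FSM X Y S) (s : S) (x : X) :
    M.trs s [x] = M.tr s x := rfl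

theorem FSM.trs_snoc (M : FSM X Y S) (s : S) (a : List X) (x : X) :
    M.trs s (a ++ [x]) = M.tr (M.trs s a) x := by
  rw [FSM.trs_append_s14]; rfl

theorem forall₂_append_split {α β : Type} {R : α → β → Prop} :
    ∀ (a : List α) (c : List β) (b : List α) (d : List β), a.length = c.length →
      List.Forall₂ R (a ++ b) (c ++ d) → List.Forall₂ R a c ∧ List.Forall₂ R b d := by
  intro a
  induction a with
  | nil =>
    intro c b d hl h
    cases c with
    | nil => exact ⟨List.Forall₂.nil, h⟩
    | cons y c => simp at hl
  | cons x a ih =>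
    intro c b d hl h
    cases c with
    | nil => simp at hl
    | cons y c =>
      simp only [List.cons_append] at h
      cases h with
      | cons hxy h =>
        obtain ⟨h1, h2⟩ := ih c b d (by simpa using hl) h
        exact ⟨List.Forall₂.cons hxy h1, h2⟩

/-- The set of product-machine state pairs reached by some `v · x̄` with
`v ∈ V` and `|x̄| ≤ ℓ`. -/
def Pset (M : FSM X Y S) (MI : FSM X Y Q) (V : Set (List X)) (ℓ : ℕ) :
    Set (S × Q) :=
  {p | ∃ v ∈ V, ∃ xb : List X, xb.length ≤ ℓ ∧
    M.trs M.init (v ++ xb) = p.1 ∧ MI.trs MI.init (v ++ xb) = p.2}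

end HSIAux

/-- completeness: if `M_I` has at most `m = n + k` states and
`D_ℓ = ∅` and `DW_ℓ = ∅` for all `0 ≤ ℓ ≤ k + 1`, then `M_I` conforms to `M`. -/
theorem hsi_complete {X Y S Q : Type} [Fintype X] [Fintype S] [Fintype Q]
    (sim : Y → Y → Prop) (M : FSM X Y S) (MI : FSM X Y Q) (n : ℕ)
    (hn : Fintype.card S = n)
    (ω : S → S → List X)
    (hω : ∀ s₁ s₂ : S, s₁ ≠ s₂ →
      ω s₁ s₂ = ω s₂ s₁ ∧ StrongWitness sim M s₁ s₂ (ω s₁ s₂))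
    (W : S → Set (List X))
    (hW : ∀ s₁ s₂ : S, s₁ ≠ s₂ →
      (∃ w ∈ W s₁, ω s₁ s₂ <+: w) ∧ (∃ w ∈ W s₂, ω s₁ s₂ <+: w))
    (V : Set (List X)) (hV : StateCover M V)
    (k : ℕ) (hk : Fintype.card Q ≤ n + k)
    (hempty : ∀ ℓ : ℕ, ℓ ≤ k + 1 →
      DSet sim M MI V ℓ = ∅ ∧ DWSet sim M MI V W ℓ = ∅) :
    Conforms sim MI M := by
  -- Emptiness of `D` and `DW` unpacked.
  have hD : ∀ v ∈ V, ∀ xb : List X, xb.length ≤ k + 1 →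
      List.Forall₂ sim (M.outs M.init (v ++ xb)) (MI.outs MI.init (v ++ xb)) := by
    intro v hv xb hlen
    by_contra h
    have h2 := (hempty xb.length hlen).1
    have hm : (v, xb) ∈ DSet sim M MI V xb.length := ⟨hv, rfl, h⟩
    rw [h2] at hm; exact hm
  have hDW : ∀ v ∈ V, ∀ xb : List X, xb.length ≤ k + 1 →
      ∀ w ∈ W (M.trs M.init (v ++ xb)),
      List.Forall₂ sim (M.outs M.init (v ++ xb ++ w)) (MI.outs MI.init (v ++ xb ++ w)) := by
    intro v hv xb hlen w hw
    by_contra h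
    have h2 := (hempty xb.length hlen).2
    have hm : (v, xb) ∈ DWSet sim M MI V W xb.length := ⟨hv, rfl, w, hw, h⟩
    rw [h2] at hm; exact hm
  -- State identification outputs are similar from the reached pair.
  have hstate : ∀ v ∈ V, ∀ xb : List X, xb.length ≤ k + 1 →
      ∀ w ∈ W (M.trs M.init (v ++ xb)),
      List.Forall₂ sim (M.outs (M.trs M.init (v ++ xb)) w)
        (MI.outs (MI.trs MI.init (v ++ xb)) w) := by
    intro v hv xb hlen w hw
    have h := hDW v hv xb hlen w hw
    rw [FSM.outs_append_s14 M M.init (v ++ xb) w, FSM.outs_append_s14 MI MI.init (v ++ xb) w] at h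
    exact (forall₂_append_split _ _ _ _
      (by rw [FSM.outs_length_s14, FSM.outs_length_s14]) h).2
  -- Key lemma: within the test suite, equal `MI`-states force equal `M`-states.
  have key : ∀ v₁ ∈ V, ∀ v₂ ∈ V, ∀ xb₁ xb₂ : List X,
      xb₁.length ≤ k + 1 → xb₂.length ≤ k + 1 →
      MI.trs MI.init (v₁ ++ xb₁) = MI.trs MI.init (v₂ ++ xb₂) →
      M.trs M.init (v₁ ++ xb₁) = M.trs M.init (v₂ ++ xb₂) := by
    intro v₁ hv₁ v₂ hv₂ xb₁ xb₂ hl₁ hl₂ hq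
    by_contra hs
    obtain ⟨-, hwit⟩ := hω _ _ hs
    obtain ⟨⟨w₁, hw₁, hp₁⟩, ⟨w₂, hw₂, hp₂⟩⟩ := hW _ _ hs
    have sim1 : List.Forall₂ sim
        (M.outs (M.trs M.init (v₁ ++ xb₁)) (ω (M.trs M.init (v₁ ++ xb₁)) (M.trs M.init (v₂ ++ xb₂))))
        (MI.outs (MI.trs MI.init (v₁ ++ xb₁)) (ω (M.trs M.init (v₁ ++ xb₁)) (M.trs M.init (v₂ ++ xb₂)))) := by
      obtain ⟨t, rfl⟩ := hp₁
      have h := hstate v₁ hv₁ xb₁ hl₁ _ hw₁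
      rw [FSM.outs_append_s14 M (M.trs M.init (v₁ ++ xb₁)) _ t,
        FSM.outs_append_s14 MI (MI.trs MI.init (v₁ ++ xb₁)) _ t] at h
      exact (forall₂_append_split _ _ _ _
        (by rw [FSM.outs_length_s14, FSM.outs_length_s14]) h).1
    have sim2 : List.Forall₂ sim
        (M.outs (M.trs M.init (v₂ ++ xb₂)) (ω (M.trs M.init (v₁ ++ xb₁)) (M.trs M.init (v₂ ++ xb₂))))
        (MI.outs (MI.trs MI.init (v₂ ++ xb₂)) (ω (M.trs M.init (v₁ ++ xb₁)) (M.trs M.init (v₂ ++ xb₂)))) := by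
      obtain ⟨t, rfl⟩ := hp₂
      have h := hstate v₂ hv₂ xb₂ hl₂ _ hw₂
      rw [FSM.outs_append_s14 M (M.trs M.init (v₂ ++ xb₂)) _ t,
        FSM.outs_append_s14 MI (MI.trs MI.init (v₂ ++ xb₂)) _ t] at h
      exact (forall₂_append_split _ _ _ _
        (by rw [FSM.outs_length_s14, FSM.outs_length_s14]) h).1
    rw [hq] at sim1
    rcases hwit Q MI (MI.trs MI.init (v₂ ++ xb₂)) with h | h
    · exact h sim1
    · exact h sim2
  -- Basic facts about the sets `Pset`.
  have hmono : ∀ ℓ, Pset M MI V ℓ ⊆ Pset M MI V (ℓ + 1) := by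
    rintro ℓ p ⟨v, hv, xb, hl, h1, h2⟩
    exact ⟨v, hv, xb, by omega, h1, h2⟩
  have hfin : ∀ ℓ, (Pset M MI V ℓ).Finite := fun ℓ => Set.toFinite _
  -- Lower bound on `|P₀|`.
  have hlow : n ≤ (Pset M MI V 0).ncard := by
    classical
    set f : S → S × Q := fun s =>
      (s, MI.trs MI.init (hV.2 s).choose) with hf
    have hinj : Function.Injective f := fun s₁ s₂ h => congrArg Prod.fst h
    have hrange : Set.range f ⊆ Pset M MI V 0 := by
      rintro p ⟨s, rfl⟩
      obtain ⟨hvV, hvs⟩ := (hV.2 s).choose_spec.1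
      exact ⟨(hV.2 s).choose, hvV, [], le_refl 0, by simpa using hvs, by simp [hf]⟩
    calc n = Fintype.card S := hn.symm
      _ = (Set.univ : Set S).ncard := by
          rw [Set.ncard_univ, Nat.card_eq_fintype_card]
      _ = (f '' Set.univ).ncard := (Set.ncard_image_of_injective _ hinj).symm
      _ ≤ (Pset M MI V 0).ncard := by
          refine Set.ncard_le_ncard ?_ (hfin 0)
          rw [Set.image_univ]; exact hrange
  -- Upper bound on `|P_{k+1}|`.
  have hupper : (Pset M MI V (k + 1)).ncard ≤ n + k := by
    have hinj : Set.InjOn Prod.snd (Pset M MI V (k + 1)) := by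
      rintro ⟨s₁, q₁⟩ h₁ ⟨s₂, q₂⟩ h₂ hsnd
      obtain ⟨v₁, hv₁, xb₁, hl₁, ha₁, hb₁⟩ := h₁
      obtain ⟨v₂, hv₂, xb₂, hl₂, ha₂, hb₂⟩ := h₂
      simp only at hsnd
      have := key v₁ hv₁ v₂ hv₂ xb₁ xb₂ hl₁ hl₂ (by rw [hb₁, hb₂]; exact hsnd)
      rw [ha₁, ha₂] at this
      simp only at this
      exact Prod.ext this hsnd
    calc (Pset M MI V (k + 1)).ncard
        = (Prod.snd '' Pset M MI V (k + 1)).ncard := (Set.ncard_image_of_injOn hinj).symm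
      _ ≤ (Set.univ : Set Q).ncard :=
          Set.ncard_le_ncard (Set.subset_univ _) (Set.toFinite _)
      _ ≤ n + k := by rw [Set.ncard_univ, Nat.card_eq_fintype_card]; exact hk
  -- The chain stabilizes at some `ℓ ≤ k`.
  have hstab : ∃ ℓ ≤ k, Pset M MI V ℓ = Pset M MI V (ℓ + 1) := by
    by_contra hcon
    push_neg at hcon
    have grow : ∀ ℓ, ℓ ≤ k + 1 → n + ℓ ≤ (Pset M MI V ℓ).ncard := by
      intro ℓ
      induction ℓ with
      | zero => intro _; simpa using hlow
      | succ ℓ ih =>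
        intro hle
        have h1 := ih (by omega)
        have hne := hcon ℓ (by omega)
        have hlt : (Pset M MI V ℓ).ncard < (Pset M MI V (ℓ + 1)).ncard :=
          Set.ncard_lt_ncard (ssubset_of_subset_of_ne (hmono ℓ) hne) (hfin _)
        omega
    have := grow (k + 1) le_rfl
    omega
  -- Once stable, always stable.
  have hstep : ∀ m, Pset M MI V m = Pset M MI V (m + 1) →
      Pset M MI V (m + 1) = Pset M MI V (m + 2) := by
    intro m hm
    refine Set.Subset.antisymm (hmono _) ?_
    rintro p ⟨v, hv, xb, hl, h1, h2⟩
    rcases Nat.lt_or_ge xb.length (m + 2) with h | h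
    · exact ⟨v, hv, xb, by omega, h1, h2⟩
    · rcases List.eq_nil_or_concat xb with rfl | ⟨ys, x, rfl⟩
      · simp only [List.length_nil] at h; omega
      · rw [List.concat_eq_append] at hl h1 h2
        have hys : ys.length ≤ m + 1 := by
          simp only [List.length_append, List.length_singleton] at hl; omega
        have hmem : (M.trs M.init (v ++ ys), MI.trs MI.init (v ++ ys)) ∈
            Pset M MI V m := by
          rw [hm]; exact ⟨v, hv, ys, hys, rfl, rfl⟩
        obtain ⟨v', hv', zb, hzl, hz1, hz2⟩ := hmem
        dsimp only at hz1 hz2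
        refine ⟨v', hv', zb ++ [x], by simp; omega, ?_, ?_⟩
        · calc M.trs M.init (v' ++ (zb ++ [x]))
              = M.tr (M.trs M.init (v' ++ zb)) x := by
                rw [← List.append_assoc, FSM.trs_snoc]
            _ = M.tr (M.trs M.init (v ++ ys)) x := by rw [hz1]
            _ = M.trs M.init (v ++ (ys ++ [x])) := by
                rw [← List.append_assoc, FSM.trs_snoc]
            _ = p.1 := h1
        · calc MI.trs MI.init (v' ++ (zb ++ [x]))
              = MI.tr (MI.trs MI.init (v' ++ zb)) x := by
                rw [← List.append_assoc, FSM.trs_snoc]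
            _ = MI.tr (MI.trs MI.init (v ++ ys)) x := by rw [hz2]
            _ = MI.trs MI.init (v ++ (ys ++ [x])) := by
                rw [← List.append_assoc, FSM.trs_snoc]
            _ = p.2 := h2
  -- Hence `P_k = P_{k+1}`.
  obtain ⟨ℓ, hℓk, hℓ⟩ := hstab
  have hall : ∀ j, Pset M MI V (ℓ + j) = Pset M MI V (ℓ + j + 1) := by
    intro j
    induction j with
    | zero => exact hℓ
    | succ j ih => exact hstep (ℓ + j) ih
  have hPk : Pset M MI V (k + 1) = Pset M MI V k := by
    have := hall (k - ℓ)
    rw [show ℓ + (k - ℓ) = k by omega] at this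
    exact this.symm
  -- `P_k` is closed under transitions and its pairs have similar outputs.
  have hclosed : ∀ p ∈ Pset M MI V k, ∀ x : X,
      (M.tr p.1 x, MI.tr p.2 x) ∈ Pset M MI V k := by
    rintro ⟨s, q⟩ ⟨v, hv, xb, hl, h1, h2⟩ x
    rw [← hPk]
    refine ⟨v, hv, xb ++ [x], by simp; omega, ?_, ?_⟩
    · rw [← List.append_assoc, FSM.trs_append_s14, FSM.trs_singleton, h1]
    · rw [← List.append_assoc, FSM.trs_append_s14, FSM.trs_singleton, h2]
  have hout : ∀ p ∈ Pset M MI V k, ∀ x : X, sim (M.out p.1 x) (MI.out p.2 x) := by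
    rintro ⟨s, q⟩ ⟨v, hv, xb, hl, h1, h2⟩ x
    have h := hD v hv (xb ++ [x]) (by simp; omega)
    rw [← List.append_assoc, FSM.outs_append_s14 M M.init (v ++ xb) [x],
      FSM.outs_append_s14 MI MI.init (v ++ xb) [x]] at h
    have h2' := (forall₂_append_split _ _ _ _
      (by rw [FSM.outs_length_s14, FSM.outs_length_s14]) h).2
    rw [h1, h2] at h2'
    simp only [FSM.outs] at h2'
    rcases h2' with _ | ⟨hx, -⟩
    exact hx
  -- The initial pair is in `P_k`.
  have hinit : (M.init, MI.init) ∈ Pset M MI V k := by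
    obtain ⟨v, ⟨hvV, -⟩, -⟩ := hV.2 M.init
    have hnil : ([] : List X) ∈ V := hV.1 v hvV [] List.nil_prefix
    exact ⟨[], hnil, [], by simp, rfl, rfl⟩
  -- Main induction.
  have main : ∀ xs : List X,
      List.Forall₂ sim (M.outs M.init xs) (MI.outs MI.init xs) ∧
      (M.trs M.init xs, MI.trs MI.init xs) ∈ Pset M MI V k := by
    intro xs
    induction xs using List.reverseRecOn with
    | nil => exact ⟨List.Forall₂.nil, hinit⟩
    | append_singleton ys x ih =>
      obtain ⟨h1, h2⟩ := ih
      refine ⟨?_, ?_⟩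
      · rw [FSM.outs_append_s14 M M.init ys [x], FSM.outs_append_s14 MI MI.init ys [x]]
        refine List.rel_append h1 ?_
        simp only [FSM.outs]
        exact List.Forall₂.cons (hout _ h2 x) List.Forall₂.nil
      · rw [FSM.trs_append_s14, FSM.trs_append_s14, FSM.trs_singleton, FSM.trs_singleton]
        exact hclosed _ h2 x
  exact fun xs => (main xs).1
end
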